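/- arXiv:1009.2232 — 5 statements merged into one kernel-verified Lean document; each statement's English description precedes it below -/
import Mathlib

section
/- Let Z be a nonzero real or complex Banach space which is lush, and let P : Z → Z be a linear M-projection (i.e. ‖z‖ = max{‖Pz‖, ‖z − Pz‖} for all z ∈ Z) with range X. Then the subspace X, equipped with the norm inherited from Z, is lush. -/
/-!
Given `u, v` in the unit sphere of `X = range P`, apply lushness of `Z` with a small `δ` to get
`f`. For `s` in the slice `S(B_Z, f, δ)`, the point `u + ω (s - P s)` stays in `B_Z` by the
M-property, which forces `|f (s - P s)| < δ`; hence `P` maps `S(B_Z, f, δ)` into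
`S(B_Z, f, 2δ) ∩ X`, and thus into a slice of the normalized restriction of `f` to `X`. Since `P`
is a contraction fixing `v`, it carries a convex combination `δ`-close to `v` to one in `X`.
-/

open scoped BigOperators

/-- The open slice `S(B_X, f, α) = {x ∈ B_X : Re f(x) > 1 - α}` of the closed unit ball. -/
def Slice (𝕜 : Type*) {X : Type*} [RCLike 𝕜] [NormedAddCommGroup X] [NormedSpace 𝕜 X]
    (f : X →L[𝕜] 𝕜) (α : ℝ) : Set X :=
  {x | ‖x‖ ≤ 1 ∧ 1 - α < RCLike.re (f x)}

/-- The convex hull of `𝕋 · S(B_X, f, α)`, i.e. all convex combinations of rotated points of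
the slice `S(B_X, f, α)`. -/
def ConvRotSlice (𝕜 : Type*) {X : Type*} [RCLike 𝕜] [NormedAddCommGroup X] [NormedSpace 𝕜 X]
    (f : X →L[𝕜] 𝕜) (α : ℝ) : Set X :=
  {x | ∃ (n : ℕ) (t : Fin n → ℝ) (ω : Fin n → 𝕜) (s : Fin n → X),
    (∀ k, 0 ≤ t k) ∧ (∑ k, t k) = 1 ∧ (∀ k, ‖ω k‖ = 1) ∧ (∀ k, s k ∈ Slice 𝕜 f α) ∧
    x = ∑ k, ((t k : 𝕜) * ω k) • s k}

/-- A Banach space `X` over `𝕜 = ℝ` or `ℂ` is *lush* if for all `u, v` in the unit sphere and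
every `ε > 0` there is a norm-one functional `f` with `u ∈ S(B_X, f, ε)` and
`dist(v, conv(𝕋 · S(B_X, f, ε))) < ε`. -/
def IsLush (𝕜 X : Type*) [RCLike 𝕜] [NormedAddCommGroup X] [NormedSpace 𝕜 X] : Prop :=
  ∀ u v : X, ‖u‖ = 1 → ‖v‖ = 1 → ∀ ε : ℝ, 0 < ε →
    ∃ f : X →L[𝕜] 𝕜, ‖f‖ = 1 ∧ u ∈ Slice 𝕜 f ε ∧
      Metric.infDist v (ConvRotSlice 𝕜 f ε) < ε

open Metric Set

section Slices

variable {𝕜 X Y : Type*} [RCLike 𝕜] [NormedAddCommGroup X] [NormedSpace 𝕜 X]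
  [NormedAddCommGroup Y] [NormedSpace 𝕜 Y]

theorem slice_mono {f : X →L[𝕜] 𝕜} {α β : ℝ} (h : α ≤ β) : Slice 𝕜 f α ⊆ Slice 𝕜 f β :=
  fun _ ⟨hx, hfx⟩ => ⟨hx, by linarith⟩

theorem slice_subset_convRotSlice (f : X →L[𝕜] 𝕜) (α : ℝ) :
    Slice 𝕜 f α ⊆ ConvRotSlice 𝕜 f α :=
  fun x hx => ⟨1, fun _ => 1, fun _ => 1, fun _ => x, fun _ => zero_le_one, by simp,
    fun _ => norm_one, fun _ => hx, by simp⟩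

theorem mapsTo_convRotSlice {f : X →L[𝕜] 𝕜} {g : Y →L[𝕜] 𝕜} {α β : ℝ} (T : X →L[𝕜] Y)
    (hT : MapsTo T (Slice 𝕜 f α) (Slice 𝕜 g β)) :
    MapsTo T (ConvRotSlice 𝕜 f α) (ConvRotSlice 𝕜 g β) := by
  rintro _ ⟨n, t, ω, s, ht, ht1, hω, hs, rfl⟩
  exact ⟨n, t, ω, T ∘ s, ht, ht1, hω, fun k => hT (hs k), by simp only [map_sum, map_smul,
    Function.comp_apply]⟩

theorem infDist_convRotSlice_lt_of_mapsTo {f : X →L[𝕜] 𝕜} {g : Y →L[𝕜] 𝕜} {α β r : ℝ}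
    (T : X →L[𝕜] Y) (hT : ∀ x, ‖T x‖ ≤ ‖x‖) (hTs : MapsTo T (Slice 𝕜 f α) (Slice 𝕜 g β))
    (hne : (ConvRotSlice 𝕜 f α).Nonempty) {x : X}
    (hx : infDist x (ConvRotSlice 𝕜 f α) < r) : infDist (T x) (ConvRotSlice 𝕜 g β) < r := by
  obtain ⟨y, hy, hxy⟩ := (infDist_lt_iff hne).1 hx
  calc infDist (T x) (ConvRotSlice 𝕜 g β) ≤ dist (T x) (T y) :=
        infDist_le_dist_of_mem (mapsTo_convRotSlice T hTs hy)
    _ ≤ dist x y := by simpa only [dist_eq_norm, ← map_sub] using hT (x - y)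
    _ < r := hxy

/-- `α ≤ 1` keeps the slice in the half-space `re f > 0`, where dividing by `‖f‖ ≤ 1` can only
increase `re f`. -/
theorem slice_subset_slice_inv_norm_smul {f : X →L[𝕜] 𝕜} (hf : ‖f‖ ≤ 1) {α : ℝ} (hα : α ≤ 1) :
    Slice 𝕜 f α ⊆ Slice 𝕜 ((‖f‖⁻¹ : 𝕜) • f) α := by
  rintro x ⟨hx, hfx⟩
  have hpos : 0 < RCLike.re (f x) := by linarith
  have hnorm : 0 < ‖f‖ := by
    by_contra! h
    have : ‖f x‖ ≤ 0 := by simpa [le_antisymm h (norm_nonneg f)] using f.le_opNorm x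
    linarith [RCLike.re_le_norm (f x)]
  refine ⟨hx, ?_⟩
  rw [smul_apply, smul_eq_mul, ← RCLike.ofReal_inv, RCLike.re_ofReal_mul]
  exact hfx.trans_le (le_mul_of_one_le_left hpos.le (one_le_inv₀ hnorm |>.2 hf))

end Slices

section MProjection

variable {𝕜 Z : Type*} [RCLike 𝕜] [NormedAddCommGroup Z] [NormedSpace 𝕜 Z]
  {P : Z →L[𝕜] Z}

theorem norm_add_eq_max_of_mProjection (hM : ∀ z, ‖z‖ = max ‖P z‖ ‖z - P z‖) {x w : Z}
    (hx : P x = x) (hw : P w = 0) : ‖x + w‖ = max ‖x‖ ‖w‖ := by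
  rw [hM, map_add, hx, hw, add_zero, add_sub_cancel_left]

/-- Moving `s` along the kernel of `P` to `u + ω • (s - P s)` stays in the unit ball, so `f` can
gain at most `1 - re (f u)` on the kernel component of `s`. -/
theorem re_apply_add_norm_apply_sub_le (hproj : ∀ z, P (P z) = P z)
    (hM : ∀ z, ‖z‖ = max ‖P z‖ ‖z - P z‖) {f : Z →L[𝕜] 𝕜} (hf : ‖f‖ ≤ 1) {u s : Z}
    (hu : P u = u) (hu1 : ‖u‖ ≤ 1) (hs : ‖s‖ ≤ 1) :
    RCLike.re (f u) + ‖f (s - P s)‖ ≤ 1 := by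
  obtain ⟨ω, hω, hωf⟩ := RCLike.exists_norm_eq_mul_self (f (s - P s))
  have hker : P (ω • (s - P s)) = 0 := by simp [hproj]
  have hball : ‖u + ω • (s - P s)‖ ≤ 1 := by
    rw [norm_add_eq_max_of_mProjection hM hu hker, norm_smul, hω, one_mul]
    exact max_le hu1 (((le_max_right _ _).trans (hM s).ge).trans hs)
  calc RCLike.re (f u) + ‖f (s - P s)‖ = RCLike.re (f (u + ω • (s - P s))) := by
        rw [map_add, map_smul, smul_eq_mul, ← hωf, map_add, RCLike.ofReal_re]
    _ ≤ ‖f (u + ω • (s - P s))‖ := RCLike.re_le_norm _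
    _ ≤ 1 := (f.le_opNorm_of_le hball).trans (by simpa using hf)

theorem apply_mem_slice_of_mProjection (hproj : ∀ z, P (P z) = P z)
    (hM : ∀ z, ‖z‖ = max ‖P z‖ ‖z - P z‖) {f : Z →L[𝕜] 𝕜} (hf : ‖f‖ ≤ 1) {u s : Z} {α β : ℝ}
    (hu : P u = u) (huα : u ∈ Slice 𝕜 f α) (hsβ : s ∈ Slice 𝕜 f β) :
    P s ∈ Slice 𝕜 f (α + β) := by
  obtain ⟨hu1, hfu⟩ := huα
  obtain ⟨hs1, hfs⟩ := hsβ
  have hkey := re_apply_add_norm_apply_sub_le hproj hM hf hu hu1 hs1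
  have hre : RCLike.re (f (P s)) = RCLike.re (f s) - RCLike.re (f (s - P s)) := by
    rw [map_sub, map_sub, sub_sub_cancel]
  refine ⟨((le_max_left _ _).trans (hM s).ge).trans hs1, ?_⟩
  linarith [RCLike.re_le_norm (f (s - P s))]

end MProjection

theorem isLush_of_mSummand_general {𝕜 Z : Type*} [RCLike 𝕜] [NormedAddCommGroup Z] [NormedSpace 𝕜 Z]
    (hZ : IsLush 𝕜 Z)
    (P : Z →L[𝕜] Z) (hproj : ∀ z, P (P z) = P z)
    (hM : ∀ z, ‖z‖ = max ‖P z‖ ‖z - P z‖)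
    (X : Submodule 𝕜 Z) (hX : ∀ z, z ∈ X ↔ ∃ w, P w = z) :
    IsLush 𝕜 X := by
  intro u v hu hv ε hε
  obtain ⟨δ, hδ, hδε, hδ1⟩ : ∃ δ > 0, δ + δ ≤ ε ∧ δ + δ ≤ 1 :=
    ⟨min ε 1 / 2, by positivity, by linarith [min_le_left ε 1], by linarith [min_le_right ε 1]⟩
  obtain ⟨f, hf, hfu, hfv⟩ := hZ u v hu hv δ hδ
  set F : X →L[𝕜] 𝕜 := f.comp X.subtypeL
  have hF : ‖F‖ ≤ 1 := (f.opNorm_comp_le _).trans (by simpa [hf] using Submodule.norm_subtypeL_le X)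
  have hFu : 0 < RCLike.re (F u) := show 0 < RCLike.re (f u) by linarith [hfu.2]
  have hFg : ∀ α ≤ δ + δ, Slice 𝕜 F α ⊆ Slice 𝕜 ((‖F‖⁻¹ : 𝕜) • F) ε := fun α hα =>
    (slice_subset_slice_inv_norm_smul hF (by linarith)).trans (slice_mono (by linarith))
  have hPX : ∀ x ∈ X, P x = x := fun x hx => by obtain ⟨w, rfl⟩ := (hX x).1 hx; exact hproj w
  set T : Z →L[𝕜] X := P.codRestrict X fun z => (hX _).2 ⟨z, rfl⟩
  have hTv : T v = v := Subtype.ext (hPX v v.2)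
  refine ⟨_, norm_smul_inv_norm fun h => by simp [h] at hFu, hFg δ (by linarith) hfu, ?_⟩
  rw [← hTv]
  exact infDist_convRotSlice_lt_of_mapsTo T (fun z => (le_max_left _ _).trans (hM z).ge)
    (fun s hs => hFg _ le_rfl (apply_mem_slice_of_mProjection hproj hM hf.le (hPX u u.2) hfu hs))
    ⟨u, slice_subset_convRotSlice f δ hfu⟩ (hfv.trans (by linarith))

/-- An M-summand of a lush space is lush. -/
theorem isLush_of_mSummand {𝕜 Z : Type*} [RCLike 𝕜] [NormedAddCommGroup Z] [NormedSpace 𝕜 Z]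
    [CompleteSpace Z] [Nontrivial Z] (hZ : IsLush 𝕜 Z)
    (P : Z →L[𝕜] Z) (hproj : ∀ z, P (P z) = P z)
    (hM : ∀ z, ‖z‖ = max ‖P z‖ ‖z - P z‖)
    (X : Submodule 𝕜 Z) (hX : ∀ z, z ∈ X ↔ ∃ w, P w = z) :
    IsLush 𝕜 X :=
  isLush_of_mSummand_general hZ P hproj hM X hX
end

section
/- Let Z be a real or complex Banach space, P : Z → Z a linear M-projection, z* ∈ Z* with ‖z*‖ ≤ 1, δ > 0, and u ∈ Z with Pu = u, ‖u‖ = 1 and Re z*(u) > 1 − δ. Then for every y ∈ Z with Py = 0 one has Re z*(y) ≤ δ·‖y‖. -/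
/-- If `P` is an M-projection, `‖z*‖ ≤ 1`, `u` is a unit vector of the range of `P` with
`Re z*(u) > 1 - δ`, then `Re z*(y) ≤ δ ‖y‖` for every `y` in the kernel of `P`. -/
theorem re_le_of_mProjection {𝕜 Z : Type*} [RCLike 𝕜] [NormedAddCommGroup Z] [NormedSpace 𝕜 Z]
    [CompleteSpace Z]
    (P : Z →L[𝕜] Z) (hproj : ∀ z, P (P z) = P z)
    (hM : ∀ z, ‖z‖ = max ‖P z‖ ‖z - P z‖)
    (f : Z →L[𝕜] 𝕜) (hf : ‖f‖ ≤ 1) (δ : ℝ) (hδ : 0 < δ)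
    (u : Z) (hu : P u = u) (hun : ‖u‖ = 1) (hre : 1 - δ < RCLike.re (f u))
    (y : Z) (hy : P y = 0) : RCLike.re (f y) ≤ δ * ‖y‖ := by
  rcases eq_or_ne y 0 with rfl | hy0
  · simp [le_of_lt, mul_nonneg hδ.le]
  have hny : (0:ℝ) < ‖y‖ := norm_pos_iff.mpr hy0
  set v : Z := (‖y‖⁻¹ : 𝕜) • y with hv
  have hPv : P v = 0 := by simp [hv, hy]
  have hnv : ‖v‖ = 1 := by
    simp [hv, norm_smul, hny.ne']
  have hnorm : ‖u + v‖ = 1 := by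
    have := hM (u + v)
    have hP : P (u + v) = u := by simp [map_add, hu, hPv]
    rw [hP] at this
    simp only [add_sub_cancel_left] at this
    rw [this, hun, hnv, max_self]
  have hle : RCLike.re (f (u + v)) ≤ 1 := by
    calc RCLike.re (f (u + v)) ≤ ‖f (u + v)‖ := RCLike.re_le_norm _
      _ ≤ ‖f‖ * ‖u + v‖ := f.le_opNorm _
      _ ≤ 1 * 1 := by
          exact mul_le_mul hf (le_of_eq hnorm) (norm_nonneg _) zero_le_one
      _ = 1 := one_mul 1
  have hfv : RCLike.re (f v) = ‖y‖⁻¹ * RCLike.re (f y) := by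
    rw [hv, map_smul, smul_eq_mul, ← RCLike.ofReal_inv, RCLike.re_ofReal_mul]
  have hsum : RCLike.re (f u) + ‖y‖⁻¹ * RCLike.re (f y) ≤ 1 := by
    rw [← hfv, ← map_add, ← map_add]; exact hle
  have : ‖y‖⁻¹ * RCLike.re (f y) ≤ δ := by linarith
  calc RCLike.re (f y) = ‖y‖ * (‖y‖⁻¹ * RCLike.re (f y)) := by
        field_simp
    _ ≤ ‖y‖ * δ := by exact mul_le_mul_of_nonneg_left this hny.le
    _ = δ * ‖y‖ := mul_comm _ _
end

section
/- Let Z be a real or complex Banach space, P : Z → Z a linear M-projection with range X, z* ∈ Z* with ‖z*‖ ≤ 1, ε > 0, and suppose there exists u ∈ X with ‖u‖ = 1 and Re z*(u) > 1 − ε/2. Then for every z ∈ Z with ‖z‖ ≤ 1 and Re z*(z) > 1 − ε/2, the projection Pz satisfies ‖Pz‖ ≤ 1 and Re z*(Pz) > 1 − ε. -/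
/-- Let `P` be an M-projection with range `X`, `‖z*‖ ≤ 1`, and suppose some unit vector `u ∈ X`
satisfies `Re z*(u) > 1 - ε/2`.  Then for every `z` in the unit ball with `Re z*(z) > 1 - ε/2`,
the projection `P z` lies in the unit ball and satisfies `Re z*(P z) > 1 - ε`. -/
theorem slice_proj_of_mProjection {𝕜 Z : Type*} [RCLike 𝕜] [NormedAddCommGroup Z]
    [NormedSpace 𝕜 Z] [CompleteSpace Z]
    (P : Z →L[𝕜] Z) (hproj : ∀ z, P (P z) = P z)
    (hM : ∀ z, ‖z‖ = max ‖P z‖ ‖z - P z‖)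
    (X : Submodule 𝕜 Z) (hX : ∀ z, z ∈ X ↔ ∃ w, P w = z)
    (f : Z →L[𝕜] 𝕜) (hf : ‖f‖ ≤ 1) (ε : ℝ) (hε : 0 < ε)
    (hu : ∃ u ∈ X, ‖u‖ = 1 ∧ 1 - ε / 2 < RCLike.re (f u)) :
    ∀ z : Z, ‖z‖ ≤ 1 → 1 - ε / 2 < RCLike.re (f z) →
      ‖P z‖ ≤ 1 ∧ 1 - ε < RCLike.re (f (P z)) := by
  obtain ⟨u, huX, hu1, hure⟩ := hu
  obtain ⟨w, hw⟩ := (hX u).1 huX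
  have hPu : P u = u := by rw [← hw, hproj]
  intro z hz hre
  have hPz : ‖P z‖ ≤ ‖z‖ := (hM z) ▸ le_max_left _ _
  have hQz : ‖z - P z‖ ≤ ‖z‖ := (hM z) ▸ le_max_right _ _
  refine ⟨hPz.trans hz, ?_⟩
  set v := u + (z - P z) with hv
  have hPv : P v = u := by
    simp [hv, hPu, hproj z]
  have hvPv : v - u = z - P z := by rw [hv]; abel
  have hvnorm : ‖v‖ ≤ 1 := by
    rw [hM v, hPv, hvPv, hu1]
    exact max_le le_rfl (hQz.trans hz)
  have hfv : RCLike.re (f v) ≤ 1 := by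
    calc RCLike.re (f v) ≤ ‖f v‖ := RCLike.re_le_norm _
      _ ≤ ‖f‖ * ‖v‖ := f.le_opNorm v
      _ ≤ 1 * 1 := by
        exact mul_le_mul hf hvnorm (norm_nonneg _) zero_le_one
      _ = 1 := one_mul 1
  have hsplit : RCLike.re (f v) = RCLike.re (f u) + RCLike.re (f (z - P z)) := by
    simp [hv, map_add]
  have hrem : RCLike.re (f (z - P z)) < ε / 2 := by linarith [hsplit ▸ hfv]
  have : RCLike.re (f (P z)) = RCLike.re (f z) - RCLike.re (f (z - P z)) := by
    simp [map_sub]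
  linarith [this]
end

section
/- Let Z be a real or complex Banach space, z* ∈ Z* with ‖z*‖ ≤ 1, η ∈ (0, 1], n ∈ ℕ, scalars θ_1, …, θ_n with Σ_{k=1}^n |θ_k| ≤ 1, and y_1, …, y_n ∈ Z with ‖y_k‖ ≤ 1 and Re z*(y_k) ≥ ‖y_k‖ − η for each k, and ‖Σ_{k=1}^n θ_k y_k‖ < η. Then |Σ_{k=1}^n θ_k ‖y_k‖| ≤ 2η + 2√η. -/
open scoped BigOperators

/-- If `‖z*‖ ≤ 1`, `η ∈ (0,1]`, `θ₁, …, θₙ` are scalars with `∑ |θ_k| ≤ 1`, and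
`y₁, …, yₙ` lie in the unit ball with `Re z*(y_k) ≥ ‖y_k‖ - η` for every `k` and
`‖∑ θ_k y_k‖ < η`, then `|∑ θ_k ‖y_k‖| ≤ 2η + 2√η`. -/
theorem abs_sum_smul_norm_le {𝕜 Z : Type*} [RCLike 𝕜] [NormedAddCommGroup Z]
    [NormedSpace 𝕜 Z] [CompleteSpace Z]
    (f : Z →L[𝕜] 𝕜) (hf : ‖f‖ ≤ 1) (η : ℝ) (hη : 0 < η) (hη' : η ≤ 1)
    (n : ℕ) (θ : Fin n → 𝕜) (hθ : ∑ k, ‖θ k‖ ≤ 1)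
    (y : Fin n → Z) (hy : ∀ k, ‖y k‖ ≤ 1)
    (hre : ∀ k, ‖y k‖ - η ≤ RCLike.re (f (y k)))
    (hsum : ‖∑ k, θ k • y k‖ < η) :
    ‖∑ k, θ k * (‖y k‖ : 𝕜)‖ ≤ 2 * η + 2 * Real.sqrt η := by
  have hkey : ∀ k, ‖(‖y k‖ : 𝕜) - f (y k)‖ ≤ Real.sqrt (2 * η) := by
    intro k
    have h1 : ‖f (y k)‖ ≤ ‖y k‖ := by
      calc ‖f (y k)‖ ≤ ‖f‖ * ‖y k‖ := f.le_opNorm _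
        _ ≤ 1 * ‖y k‖ := by
            exact mul_le_mul_of_nonneg_right hf (norm_nonneg _)
        _ = ‖y k‖ := one_mul _
    have hnsq : ‖f (y k)‖ ^ 2
        = RCLike.re (f (y k)) * RCLike.re (f (y k))
          + RCLike.im (f (y k)) * RCLike.im (f (y k)) :=
      RCLike.norm_sq_eq_def
    have hdsq : ‖(‖y k‖ : 𝕜) - f (y k)‖ ^ 2
        = (‖y k‖ - RCLike.re (f (y k))) ^ 2 + RCLike.im (f (y k)) ^ 2 := by
      rw [RCLike.norm_sq_eq_def]
      simp
      ring
    have hsq : ‖(‖y k‖ : 𝕜) - f (y k)‖ ^ 2 ≤ 2 * η := by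
      have h2 := hre k
      have h3 := hy k
      have h4 : (0:ℝ) ≤ ‖y k‖ := norm_nonneg _
      nlinarith [norm_nonneg (f (y k)), mul_le_mul_of_nonneg_left h2 h4,
        mul_le_mul h1 h1 (norm_nonneg _) h4]
    calc ‖(‖y k‖ : 𝕜) - f (y k)‖
        = Real.sqrt (‖(‖y k‖ : 𝕜) - f (y k)‖ ^ 2) := by
          rw [Real.sqrt_sq (norm_nonneg _)]
      _ ≤ Real.sqrt (2 * η) := Real.sqrt_le_sqrt hsq
  have hmap : f (∑ k, θ k • y k) = ∑ k, θ k * f (y k) := by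
    rw [map_sum]; simp [smul_eq_mul]
  have hsplit : (∑ k, θ k * (‖y k‖ : 𝕜))
      = (∑ k, θ k * ((‖y k‖ : 𝕜) - f (y k))) + f (∑ k, θ k • y k) := by
    rw [hmap, ← Finset.sum_add_distrib]
    congr 1; ext k; ring
  have h5 : ‖∑ k, θ k * ((‖y k‖ : 𝕜) - f (y k))‖ ≤ Real.sqrt (2 * η) := by
    calc ‖∑ k, θ k * ((‖y k‖ : 𝕜) - f (y k))‖
        ≤ ∑ k, ‖θ k * ((‖y k‖ : 𝕜) - f (y k))‖ := norm_sum_le _ _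
      _ ≤ ∑ k, ‖θ k‖ * Real.sqrt (2 * η) := by
          apply Finset.sum_le_sum
          intro k _
          rw [norm_mul]
          exact mul_le_mul_of_nonneg_left (hkey k) (norm_nonneg _)
      _ = (∑ k, ‖θ k‖) * Real.sqrt (2 * η) := by rw [← Finset.sum_mul]
      _ ≤ 1 * Real.sqrt (2 * η) :=
          mul_le_mul_of_nonneg_right hθ (Real.sqrt_nonneg _)
      _ = Real.sqrt (2 * η) := one_mul _
  have h6 : ‖f (∑ k, θ k • y k)‖ ≤ η := by
    calc ‖f (∑ k, θ k • y k)‖ ≤ ‖f‖ * ‖∑ k, θ k • y k‖ := f.le_opNorm _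
      _ ≤ 1 * η := by
          apply mul_le_mul hf hsum.le (norm_nonneg _) zero_le_one
      _ = η := one_mul _
  have hsqrt : Real.sqrt (2 * η) ≤ 2 * Real.sqrt η := by
    have : (2 : ℝ) * η ≤ 4 * η := by linarith
    calc Real.sqrt (2 * η) ≤ Real.sqrt (4 * η) := Real.sqrt_le_sqrt this
      _ = 2 * Real.sqrt η := by
          rw [show (4:ℝ) * η = 2^2 * η by ring, Real.sqrt_mul (by positivity),
            Real.sqrt_sq (by norm_num : (0:ℝ) ≤ 2)]
  calc ‖∑ k, θ k * (‖y k‖ : 𝕜)‖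
      ≤ ‖∑ k, θ k * ((‖y k‖ : 𝕜) - f (y k))‖ + ‖f (∑ k, θ k • y k)‖ := by
        rw [hsplit]; exact norm_add_le _ _
    _ ≤ Real.sqrt (2 * η) + η := add_le_add h5 h6
    _ ≤ 2 * η + 2 * Real.sqrt η := by linarith
end

section
/- Let Z be a real or complex Banach space, P : Z → Z a linear L-projection with range X, z* ∈ Z* with ‖z*‖ = 1, η > 0, and suppose u ∈ X satisfies ‖u‖ = 1 and Re z*(u) > 1 − η. Then for every z ∈ Z with ‖z‖ ≤ 1 and Re z*(z) > 1 − η, the element x̃ = Pz + ‖z − Pz‖·u satisfies ‖x̃‖ ≤ 1 and Re z*(x̃) > 1 − 2η. -/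
/-- Let `P` be an L-projection with range `X`, `‖z*‖ = 1`, and `u ∈ X` with `‖u‖ = 1` and
`Re z*(u) > 1 - η`.  Then for every `z` in the unit ball with `Re z*(z) > 1 - η`, the element
`x̃ = P z + ‖z - P z‖ • u` satisfies `‖x̃‖ ≤ 1` and `Re z*(x̃) > 1 - 2η`. -/
theorem replace_complement_of_lProjection {𝕜 Z : Type*} [RCLike 𝕜] [NormedAddCommGroup Z]
    [NormedSpace 𝕜 Z] [CompleteSpace Z]
    (P : Z →L[𝕜] Z) (hproj : ∀ z, P (P z) = P z)
    (hL : ∀ z, ‖z‖ = ‖P z‖ + ‖z - P z‖)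
    (X : Submodule 𝕜 Z) (hX : ∀ z, z ∈ X ↔ ∃ w, P w = z)
    (f : Z →L[𝕜] 𝕜) (hf : ‖f‖ = 1) (η : ℝ) (hη : 0 < η)
    (u : Z) (huX : u ∈ X) (hun : ‖u‖ = 1) (hure : 1 - η < RCLike.re (f u)) :
    ∀ z : Z, ‖z‖ ≤ 1 → 1 - η < RCLike.re (f z) →
      ‖P z + (‖z - P z‖ : 𝕜) • u‖ ≤ 1 ∧
        1 - 2 * η < RCLike.re (f (P z + (‖z - P z‖ : 𝕜) • u)) := by
  intro z hz hre
  set b : ℝ := ‖z - P z‖ with hb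
  have hb0 : 0 ≤ b := norm_nonneg _
  have hab : ‖P z‖ + b ≤ 1 := by rw [← hL z]; exact hz
  have hb1 : b ≤ 1 := le_trans (le_add_of_nonneg_left (norm_nonneg _)) hab
  constructor
  · calc ‖P z + (b : 𝕜) • u‖ ≤ ‖P z‖ + ‖(b : 𝕜) • u‖ := norm_add_le _ _
      _ = ‖P z‖ + b := by
        rw [norm_smul, hun, mul_one, RCLike.norm_ofReal, abs_of_nonneg hb0]
      _ ≤ 1 := hab
  · have hsplit : RCLike.re (f z) = RCLike.re (f (P z)) + RCLike.re (f (z - P z)) := by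
      have hzeq : P z + (z - P z) = z := by abel
      conv_lhs => rw [← hzeq]
      simp [map_add]
    have h1 : RCLike.re (f (z - P z)) ≤ b := by
      calc RCLike.re (f (z - P z)) ≤ ‖f (z - P z)‖ := RCLike.re_le_norm _
        _ ≤ ‖f‖ * ‖z - P z‖ := f.le_opNorm _
        _ = b := by rw [hf, one_mul]
    have h2 : 1 - η - b < RCLike.re (f (P z)) := by
      have := hsplit ▸ hre; linarith
    have h3 : RCLike.re (f ((b : 𝕜) • u)) = b * RCLike.re (f u) := by
      rw [map_smul, smul_eq_mul, RCLike.mul_re, RCLike.ofReal_re, RCLike.ofReal_im]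
      ring
    have h4 : b * (1 - η) ≤ b * RCLike.re (f u) :=
      mul_le_mul_of_nonneg_left hure.le hb0
    have : RCLike.re (f (P z + (b : 𝕜) • u)) =
        RCLike.re (f (P z)) + RCLike.re (f ((b : 𝕜) • u)) := by
      rw [map_add, map_add]
    rw [this, h3]
    nlinarith
end
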